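/- arXiv:2009.03206 — 2 statements merged into one kernel-verified Lean document; each statement's English description precedes it below -/
import Mathlib

section
/- Let T be a bounded linear operator on a complex Hilbert space. Then for all r ≥ 1 and all α ∈ [0,1], w(T)^{2r} ≤ (α/2) w(T²)^r + ‖(α/4)|T|^{2r} + (1 - 3α/4)|T*|^{2r}‖. -/
open ContinuousLinearMap in
/-- The numerical radius `w(T) = sup { |⟨Tx,x⟩| : ‖x‖ = 1 }`. -/
noncomputable def numRad {H : Type*} [NormedAddCommGroup H] [InnerProductSpace ℂ H]
    (T : H →L[ℂ] H) : ℝ :=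
  sSup {r : ℝ | ∃ x : H, ‖x‖ = 1 ∧ r = ‖(inner ℂ (T x) x : ℂ)‖}

/-- `|T| = (T^*T)^{1/2}`; note `absOp (adjoint T) = (TT^*)^{1/2} = |T^*|`. -/
noncomputable def absOp {H : Type*} [NormedAddCommGroup H] [InnerProductSpace ℂ H]
    [CompleteSpace H] (T : H →L[ℂ] H) : H →L[ℂ] H :=
  CFC.sqrt (ContinuousLinearMap.adjoint T * T)

/-- Real powers of a (positive) operator via the continuous functional calculus. -/
noncomputable def opRPow {H : Type*} [NormedAddCommGroup H] [InnerProductSpace ℂ H]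
    [CompleteSpace H] (A : H →L[ℂ] H) (r : ℝ) : H →L[ℂ] H :=
  CFC.rpow A r

/-! Buzano's inequality `|⟪a, e⟫⟪e, b⟫| ≤ (‖a‖‖b‖ + |⟪a, b⟫|) / 2` for a unit vector `e`, applied to
`e = x`, `a = T x`, `b = T† x`, bounds `|⟪T x, x⟫|²` by `(‖T x‖‖T† x‖ + w(T²)) / 2`. Raising this to
the power `r` (convexity of `t ↦ t ^ r`, then AM–GM) and applying McCarthy's inequality
`⟪A x, x⟫ ^ r ≤ ⟪A ^ r x, x⟫` to `A = T†T` and `A = TT†` gives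
`|⟪T x, x⟫|^{2r} ≤ w(T²)^r / 2 + ⟪(|T|^{2r} + |T*|^{2r}) x, x⟫ / 4`, while trivially
`|⟪T x, x⟫|^{2r} ≤ ‖T† x‖^{2r} ≤ ⟪|T*|^{2r} x, x⟫`. The convex combination of the two bounds with
weights `α` and `1 - α` is at most the right-hand side, uniformly in the unit vector `x`. -/

open scoped InnerProductSpace
open RCLike ContinuousLinearMap

theorem norm_inner_mul_inner_le {𝕜 E : Type*} [RCLike 𝕜] [NormedAddCommGroup E]
    [InnerProductSpace 𝕜 E] {e : E} (he : ‖e‖ = 1) (a b : E) :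
    ‖⟪a, e⟫_𝕜 * ⟪e, b⟫_𝕜‖ ≤ (‖a‖ * ‖b‖ + ‖⟪a, b⟫_𝕜‖) / 2 := by
  have hreflect : ⟪(𝕜 ∙ e).reflection a, b⟫_𝕜 = 2 * (⟪a, e⟫_𝕜 * ⟪e, b⟫_𝕜) - ⟪a, b⟫_𝕜 := by
    simp only [Submodule.reflection_apply, Submodule.starProjection_unit_singleton 𝕜 he,
      inner_sub_left, inner_smul_left, two_smul, inner_add_left, inner_conj_symm]
    ring
  have hbound : ‖2 * (⟪a, e⟫_𝕜 * ⟪e, b⟫_𝕜) - ⟪a, b⟫_𝕜‖ ≤ ‖a‖ * ‖b‖ := by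
    rw [← hreflect, ← (𝕜 ∙ e).reflection.norm_map a]
    exact norm_inner_le_norm _ _
  have htriangle := norm_sub_norm_le (2 * (⟪a, e⟫_𝕜 * ⟪e, b⟫_𝕜)) ⟪a, b⟫_𝕜
  rw [norm_mul, RCLike.norm_ofNat] at htriangle
  linarith

namespace Real

theorem half_mul_add_rpow_le {a b c r : ℝ} (ha : 0 ≤ a) (hb : 0 ≤ b) (hc : 0 ≤ c)
    (hr : 1 ≤ r) : ((a * b + c) / 2) ^ r ≤ (a ^ (2 * r) + b ^ (2 * r)) / 4 + c ^ r / 2 := by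
  have hmean := (convexOn_rpow hr).2 (mul_nonneg ha hb) hc (by norm_num : (0 : ℝ) ≤ 1 / 2)
    (by norm_num : (0 : ℝ) ≤ 1 / 2) (by norm_num)
  have hamgm : (a * b) ^ r ≤ (a ^ (2 * r) + b ^ (2 * r)) / 2 := by
    rw [mul_rpow ha hb, mul_comm 2 r, rpow_mul ha, rpow_mul hb, rpow_two, rpow_two]
    nlinarith [sq_nonneg (a ^ r - b ^ r)]
  calc ((a * b + c) / 2) ^ r = (1 / 2 * (a * b) + 1 / 2 * c) ^ r := by ring_nf
  _ ≤ 1 / 2 * (a * b) ^ r + 1 / 2 * c ^ r := hmean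
  _ ≤ _ := by linarith

theorem tangent_le_rpow {c t s : ℝ} (hc : 0 < c) (ht : 0 ≤ t) (hs : 1 ≤ s) :
    c ^ s * (1 - s) + s * c ^ (s - 1) * t ≤ t ^ s := by
  have hbernoulli :=
    one_add_mul_self_le_rpow_one_add (s := t / c - 1) (by linarith [div_nonneg ht hc.le]) hs
  rw [add_sub_cancel, div_rpow ht hc.le, le_div_iff₀' (by positivity)] at hbernoulli
  calc c ^ s * (1 - s) + s * c ^ (s - 1) * t = c ^ s * (1 + s * (t / c - 1)) := by
        rw [rpow_sub_one hc.ne']; field_simp; ring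
  _ ≤ t ^ s := hbernoulli

end Real

namespace ContinuousLinearMap

section RCLike

variable {𝕜 E : Type*} [RCLike 𝕜] [NormedAddCommGroup E] [InnerProductSpace 𝕜 E]

theorem re_inner_le_re_inner_of_le {A B : E →L[𝕜] E} (h : A ≤ B) (x : E) :
    re ⟪A x, x⟫_𝕜 ≤ re ⟪B x, x⟫_𝕜 := by
  have := ((le_def A B).1 h).re_inner_nonneg_left x
  rwa [sub_apply, inner_sub_left, map_sub, sub_nonneg] at this

theorem re_inner_le_opNorm (A : E →L[𝕜] E) {x : E} (hx : ‖x‖ = 1) : re ⟪A x, x⟫_𝕜 ≤ ‖A‖ :=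
  calc re ⟪A x, x⟫_𝕜 ≤ ‖A x‖ * ‖x‖ := re_inner_le_norm _ _
  _ ≤ ‖A‖ * ‖x‖ * ‖x‖ := by gcongr; exact A.le_opNorm x
  _ = ‖A‖ := by rw [hx, mul_one, mul_one]

end RCLike

variable {H : Type*} [NormedAddCommGroup H] [InnerProductSpace ℂ H]

theorem re_inner_smul_add_smul_apply (a b : ℝ) (A B : H →L[ℂ] H) (x : H) :
    re ⟪(a • A + b • B) x, x⟫_ℂ = a * re ⟪A x, x⟫_ℂ + b * re ⟪B x, x⟫_ℂ := by
  simp [← Complex.coe_smul]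
  ring

variable [CompleteSpace H]

/-- McCarthy's inequality. The tangent line of `t ↦ t ^ s` at `c = re ⟪A x, x⟫` lies below it on
the spectrum of `A`, and the vector state at `x` maps that tangent line evaluated at `A` to `c ^ s`. -/
theorem rpow_re_inner_le_re_inner_rpow {A : H →L[ℂ] H} (hA : 0 ≤ A) {s : ℝ} (hs : 1 ≤ s)
    {x : H} (hx : ‖x‖ = 1) : (re ⟪A x, x⟫_ℂ) ^ s ≤ re ⟪(A ^ s) x, x⟫_ℂ := by
  have hsa : IsSelfAdjoint A := hA.isSelfAdjoint
  rcases (((nonneg_iff_isPositive A).1 hA).re_inner_nonneg_left x).eq_or_lt with hc | hc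
  · rw [← hc, Real.zero_rpow (by linarith)]
    exact ((nonneg_iff_isPositive _).1 CFC.rpow_nonneg).re_inner_nonneg_left x
  set c := re ⟪A x, x⟫_ℂ
  have htangent : (c ^ s * (1 - s)) • (1 : H →L[ℂ] H) + (s * c ^ (s - 1)) • A ≤ A ^ s :=
    calc (c ^ s * (1 - s)) • (1 : H →L[ℂ] H) + (s * c ^ (s - 1)) • A
        = cfc (fun t : ℝ => c ^ s * (1 - s) + s * c ^ (s - 1) * t) A := by
          rw [cfc_const_add _ _ A (by fun_prop) hsa, cfc_const_mul_id _ A hsa,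
            Algebra.algebraMap_eq_smul_one]
    _ ≤ cfc (fun t : ℝ => t ^ s) A :=
          cfc_mono (fun t ht => Real.tangent_le_rpow hc (spectrum_nonneg_of_nonneg hA ht) hs)
            (by fun_prop) (Real.continuous_rpow_const (by linarith)).continuousOn
    _ = A ^ s := (CFC.rpow_eq_cfc_real hA).symm
  have := re_inner_le_re_inner_of_le htangent x
  rw [re_inner_smul_add_smul_apply, one_apply_eq_self, inner_self_eq_norm_sq, hx, one_pow,
    mul_one, mul_assoc, ← Real.rpow_add_one hc.ne', sub_add_cancel] at this
  linarith

end ContinuousLinearMap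

section AbsoluteValue

variable {H : Type*} [NormedAddCommGroup H] [InnerProductSpace ℂ H] [CompleteSpace H]

theorem opRPow_absOp_two_mul (T : H →L[ℂ] H) {r : ℝ} (hr : 0 ≤ r) :
    opRPow (absOp T) (2 * r) = (adjoint T * T) ^ r := by
  have h := CFC.rpow_sqrt_nnreal (a := adjoint T * T) (x := (2 * r).toNNReal)
    (star_mul_self_nonneg T)
  rwa [Real.coe_toNNReal _ (by positivity), mul_div_cancel_left₀ _ two_ne_zero] at h

theorem norm_apply_rpow_le_re_inner_opRPow_absOp (T : H →L[ℂ] H) {r : ℝ} (hr : 1 ≤ r) {x : H}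
    (hx : ‖x‖ = 1) : ‖T x‖ ^ (2 * r) ≤ re ⟪opRPow (absOp T) (2 * r) x, x⟫_ℂ := by
  have h := rpow_re_inner_le_re_inner_rpow (A := adjoint T * T) (star_mul_self_nonneg T) hr hx
  have hsq : re ⟪(adjoint T * T) x, x⟫_ℂ = ‖T x‖ ^ 2 :=
    (apply_norm_sq_eq_inner_adjoint_left T x).symm
  rwa [hsq, ← Real.rpow_natCast, ← Real.rpow_mul (norm_nonneg _), Nat.cast_ofNat,
    ← opRPow_absOp_two_mul T (by linarith)] at h

end AbsoluteValue

section NumericalRadius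

variable {H : Type*} [NormedAddCommGroup H] [InnerProductSpace ℂ H]

theorem bddAbove_numRad_set (T : H →L[ℂ] H) :
    BddAbove {r : ℝ | ∃ x : H, ‖x‖ = 1 ∧ r = ‖⟪T x, x⟫_ℂ‖} := by
  refine ⟨‖T‖, ?_⟩
  rintro _ ⟨x, hx, rfl⟩
  calc ‖⟪T x, x⟫_ℂ‖ ≤ ‖T x‖ * ‖x‖ := norm_inner_le_norm _ _
  _ ≤ ‖T‖ * ‖x‖ * ‖x‖ := by gcongr; exact T.le_opNorm x
  _ = ‖T‖ := by rw [hx, mul_one, mul_one]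

theorem numRad_nonneg (T : H →L[ℂ] H) : 0 ≤ numRad T :=
  Real.sSup_nonneg (by rintro _ ⟨x, -, rfl⟩; exact norm_nonneg _)

theorem norm_inner_le_numRad (T : H →L[ℂ] H) {x : H} (hx : ‖x‖ = 1) :
    ‖⟪T x, x⟫_ℂ‖ ≤ numRad T :=
  le_csSup (bddAbove_numRad_set T) ⟨x, hx, rfl⟩

theorem numRad_rpow_le (T : H →L[ℂ] H) {p M : ℝ} (hp : 0 < p) (hM : 0 ≤ M)
    (h : ∀ x : H, ‖x‖ = 1 → ‖⟪T x, x⟫_ℂ‖ ^ p ≤ M) : numRad T ^ p ≤ M := by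
  have hle : numRad T ≤ M ^ p⁻¹ := by
    refine Real.sSup_le ?_ (by positivity)
    rintro _ ⟨x, hx, rfl⟩
    rw [← Real.rpow_le_rpow_iff (norm_nonneg _) (by positivity) hp,
      Real.rpow_inv_rpow hM hp.ne']
    exact h x hx
  calc numRad T ^ p ≤ (M ^ p⁻¹) ^ p := by gcongr; exact numRad_nonneg T
  _ = M := Real.rpow_inv_rpow hM hp.ne'

variable [CompleteSpace H]

theorem norm_inner_sq_le_numRad_mul_self (T : H →L[ℂ] H) {x : H} (hx : ‖x‖ = 1) :
    ‖⟪T x, x⟫_ℂ‖ ^ 2 ≤ (‖T x‖ * ‖adjoint T x‖ + numRad (T * T)) / 2 := by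
  have h := norm_inner_mul_inner_le (𝕜 := ℂ) hx (T x) (adjoint T x)
  rw [adjoint_inner_right, adjoint_inner_right, norm_mul, ← sq] at h
  exact h.trans (by gcongr; exact norm_inner_le_numRad (T * T) hx)

theorem norm_inner_rpow_le_numRad_mul_self_add (T : H →L[ℂ] H) {r : ℝ} (hr : 1 ≤ r) {x : H}
    (hx : ‖x‖ = 1) :
    ‖⟪T x, x⟫_ℂ‖ ^ (2 * r) ≤ numRad (T * T) ^ r / 2 +
      (re ⟪opRPow (absOp T) (2 * r) x, x⟫_ℂ +
        re ⟪opRPow (absOp (adjoint T)) (2 * r) x, x⟫_ℂ) / 4 := by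
  have hT := norm_apply_rpow_le_re_inner_opRPow_absOp T hr hx
  have hT' := norm_apply_rpow_le_re_inner_opRPow_absOp (adjoint T) hr hx
  calc ‖⟪T x, x⟫_ℂ‖ ^ (2 * r) = (‖⟪T x, x⟫_ℂ‖ ^ 2) ^ r := by
        rw [← Real.rpow_natCast, ← Real.rpow_mul (norm_nonneg _), Nat.cast_ofNat]
  _ ≤ ((‖T x‖ * ‖adjoint T x‖ + numRad (T * T)) / 2) ^ r := by
        gcongr; exact norm_inner_sq_le_numRad_mul_self T hx
  _ ≤ (‖T x‖ ^ (2 * r) + ‖adjoint T x‖ ^ (2 * r)) / 4 + numRad (T * T) ^ r / 2 :=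
        Real.half_mul_add_rpow_le (norm_nonneg _) (norm_nonneg _) (numRad_nonneg _) hr
  _ ≤ _ := by linarith

theorem norm_inner_rpow_le_re_inner_opRPow_absOp_adjoint (T : H →L[ℂ] H) {r : ℝ} (hr : 1 ≤ r)
    {x : H} (hx : ‖x‖ = 1) :
    ‖⟪T x, x⟫_ℂ‖ ^ (2 * r) ≤ re ⟪opRPow (absOp (adjoint T)) (2 * r) x, x⟫_ℂ := by
  have h : ‖⟪T x, x⟫_ℂ‖ ≤ ‖adjoint T x‖ := by
    simpa [adjoint_inner_right, hx] using norm_inner_le_norm (𝕜 := ℂ) x (adjoint T x)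
  calc ‖⟪T x, x⟫_ℂ‖ ^ (2 * r) ≤ ‖adjoint T x‖ ^ (2 * r) := by gcongr
  _ ≤ _ := norm_apply_rpow_le_re_inner_opRPow_absOp (adjoint T) hr hx

end NumericalRadius

theorem stmt10 {H : Type*} [NormedAddCommGroup H] [InnerProductSpace ℂ H] [CompleteSpace H]
    (T : H →L[ℂ] H) (r : ℝ) (hr : 1 ≤ r) (α : ℝ) (hα0 : 0 ≤ α) (hα1 : α ≤ 1) :
    numRad T ^ (2 * r) ≤
      (α / 2) * numRad (T * T) ^ r +
        ‖(α / 4) • opRPow (absOp T) (2 * r) +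
          (1 - 3 * α / 4) • opRPow (absOp (ContinuousLinearMap.adjoint T)) (2 * r)‖ := by
  refine numRad_rpow_le T (by linarith) (add_nonneg (mul_nonneg (by linarith)
    (Real.rpow_nonneg (numRad_nonneg _) r)) (norm_nonneg _)) fun x hx => ?_
  have hmixed := norm_inner_rpow_le_numRad_mul_self_add T hr hx
  have hadjoint := norm_inner_rpow_le_re_inner_opRPow_absOp_adjoint T hr hx
  have hnorm := re_inner_le_opNorm ((α / 4) • opRPow (absOp T) (2 * r) +
    (1 - 3 * α / 4) • opRPow (absOp (adjoint T)) (2 * r)) hx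
  rw [re_inner_smul_add_smul_apply] at hnorm
  nlinarith [mul_le_mul_of_nonneg_left hmixed hα0,
    mul_le_mul_of_nonneg_left hadjoint (sub_nonneg.2 hα1)]
end

section
/- Let H₁, H₂ be complex Hilbert spaces and let 𝕋 be the off-diagonal block operator on H₁ ⊕ H₂ given by 𝕋(x,y) = (By, Cx), with B : H₂ → H₁ and C : H₁ → H₂ bounded. Then for every α ∈ [0,1], w(𝕋)² ≤ max{‖(1-α)BB* + αC*C‖, ‖αB*B + (1-α)CC*‖}. -/
/-! For a unit vector `z = (x, y)` one has `⟪𝕋 z, z⟫ = ⟪B y, x⟫ + ⟪C x, y⟫`, which is bounded both by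
`‖B y‖ ‖x‖ + ‖C x‖ ‖y‖` and, moving `B` and `C` across the inner products, by
`‖B* x‖ ‖y‖ + ‖C* y‖ ‖x‖`. Interpolating the squares of these two bounds with weights `α`, `1 - α`
and applying Cauchy–Schwarz in `ℝ²` (using `‖x‖² + ‖y‖² = 1`) gives
`|⟪𝕋 z, z⟫|² ≤ ⟪P x, x⟫ + ⟪Q y, y⟫ ≤ ‖P‖ ‖x‖² + ‖Q‖ ‖y‖²` for `P = (1 - α) B B* + α C* C` and
`Q = α B* B + (1 - α) C C*`, since `⟪(a A* A + b D* D) x, x⟫ = a ‖A x‖² + b ‖D x‖²`. -/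

open ContinuousLinearMap
open scoped InnerProduct InnerProductSpace

lemma sq_le_convex_comb_sq {r u v α : ℝ} (hr : 0 ≤ r) (hu : r ≤ u) (hv : r ≤ v)
    (hα0 : 0 ≤ α) (hα1 : α ≤ 1) : r ^ 2 ≤ α * u ^ 2 + (1 - α) * v ^ 2 := by
  have hu2 : r ^ 2 ≤ u ^ 2 := pow_le_pow_left₀ hr hu 2
  have hv2 : r ^ 2 ≤ v ^ 2 := pow_le_pow_left₀ hr hv 2
  nlinarith

lemma numRad_sq_le {H : Type*} [NormedAddCommGroup H] [InnerProductSpace ℂ H]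
    {T : H →L[ℂ] H} {c : ℝ} (hc : 0 ≤ c)
    (h : ∀ x : H, ‖x‖ = 1 → ‖⟪T x, x⟫_ℂ‖ ^ 2 ≤ c) : numRad T ^ 2 ≤ c := by
  have hnonneg : 0 ≤ numRad T := Real.sSup_nonneg <| by rintro r ⟨x, -, rfl⟩; exact norm_nonneg _
  have hle : numRad T ≤ √c := Real.sSup_le
    (by rintro r ⟨x, hx, rfl⟩; exact Real.le_sqrt_of_sq_le (h x hx)) (Real.sqrt_nonneg c)
  calc numRad T ^ 2 ≤ √c ^ 2 := pow_le_pow_left₀ hnonneg hle 2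
    _ = c := Real.sq_sqrt hc

section OffDiagonal

variable {𝕜 E F : Type*} [RCLike 𝕜]
  [NormedAddCommGroup E] [InnerProductSpace 𝕜 E] [NormedAddCommGroup F] [InnerProductSpace 𝕜 F]

lemma inner_apply_self_of_offDiagonal {B : F →L[𝕜] E} {C : E →L[𝕜] F}
    {T : WithLp 2 (E × F) →L[𝕜] WithLp 2 (E × F)}
    (hT : ∀ x : E, ∀ y : F,
      T ((WithLp.equiv 2 (E × F)).symm (x, y)) = (WithLp.equiv 2 (E × F)).symm (B y, C x))
    (z : WithLp 2 (E × F)) : ⟪T z, z⟫_𝕜 = ⟪B z.snd, z.fst⟫_𝕜 + ⟪C z.fst, z.snd⟫_𝕜 := by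
  rw [show z = (WithLp.equiv 2 (E × F)).symm (z.fst, z.snd) from rfl, hT]
  rfl

variable [CompleteSpace E] [CompleteSpace F]

lemma sq_norm_inner_add_inner_le (B : F →L[𝕜] E) (C : E →L[𝕜] F) (x : E) (y : F)
    {α : ℝ} (hα0 : 0 ≤ α) (hα1 : α ≤ 1) :
    ‖⟪B y, x⟫_𝕜 + ⟪C x, y⟫_𝕜‖ ^ 2 ≤
      (α * (‖B y‖ ^ 2 + ‖C x‖ ^ 2) + (1 - α) * (‖(B†) x‖ ^ 2 + ‖(C†) y‖ ^ 2)) *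
        (‖x‖ ^ 2 + ‖y‖ ^ 2) := by
  have direct : ‖⟪B y, x⟫_𝕜 + ⟪C x, y⟫_𝕜‖ ≤ ‖B y‖ * ‖x‖ + ‖C x‖ * ‖y‖ :=
    (norm_add_le _ _).trans (add_le_add (norm_inner_le_norm _ _) (norm_inner_le_norm _ _))
  have moved : ‖⟪B y, x⟫_𝕜 + ⟪C x, y⟫_𝕜‖ ≤ ‖(B†) x‖ * ‖y‖ + ‖(C†) y‖ * ‖x‖ := by
    rw [← adjoint_inner_right, ← adjoint_inner_right]
    refine (norm_add_le _ _).trans (add_le_add ?_ ?_)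
    · rw [← norm_inner_symm]; exact norm_inner_le_norm _ _
    · rw [← norm_inner_symm]; exact norm_inner_le_norm _ _
  have cauchy_schwarz (a b p q : ℝ) : (a * p + b * q) ^ 2 ≤ (a ^ 2 + b ^ 2) * (p ^ 2 + q ^ 2) := by
    nlinarith [sq_nonneg (a * q - b * p)]
  have interpolated := sq_le_convex_comb_sq (norm_nonneg _) direct moved hα0 hα1
  nlinarith [cauchy_schwarz ‖B y‖ ‖C x‖ ‖x‖ ‖y‖, cauchy_schwarz ‖(B†) x‖ ‖(C†) y‖ ‖y‖ ‖x‖]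

end OffDiagonal

section Weighted

variable {E F G : Type*}
  [NormedAddCommGroup E] [InnerProductSpace ℂ E] [CompleteSpace E]
  [NormedAddCommGroup F] [InnerProductSpace ℂ F] [CompleteSpace F]
  [NormedAddCommGroup G] [InnerProductSpace ℂ G] [CompleteSpace G]

lemma re_inner_smul_adjoint_comp_self_add_apply (A : E →L[ℂ] F) (D : E →L[ℂ] G) (a b : ℝ)
    (x : E) :
    RCLike.re ⟪(a • (A† ∘L A) + b • (D† ∘L D)) x, x⟫_ℂ = a * ‖A x‖ ^ 2 + b * ‖D x‖ ^ 2 := by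
  simp only [add_apply, smul_apply, RCLike.real_smul_eq_coe_smul (K := ℂ), inner_add_left,
    inner_smul_real_left, map_add, apply_norm_sq_eq_inner_adjoint_left, smul_eq_mul,
    RCLike.re_ofReal_mul]

lemma smul_norm_sq_add_smul_norm_sq_le (A : E →L[ℂ] F) (D : E →L[ℂ] G) (a b : ℝ) (x : E) :
    a * ‖A x‖ ^ 2 + b * ‖D x‖ ^ 2 ≤ ‖a • (A† ∘L A) + b • (D† ∘L D)‖ * ‖x‖ ^ 2 := by
  set P := a • (A† ∘L A) + b • (D† ∘L D)
  calc a * ‖A x‖ ^ 2 + b * ‖D x‖ ^ 2 = RCLike.re ⟪P x, x⟫_ℂ :=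
        (re_inner_smul_adjoint_comp_self_add_apply A D a b x).symm
    _ ≤ ‖⟪P x, x⟫_ℂ‖ := RCLike.re_le_norm _
    _ ≤ ‖P x‖ * ‖x‖ := norm_inner_le_norm _ _
    _ ≤ ‖P‖ * ‖x‖ * ‖x‖ := by gcongr; exact P.le_opNorm x
    _ = ‖P‖ * ‖x‖ ^ 2 := by ring

end Weighted

theorem stmt14 {H₁ H₂ : Type*} [NormedAddCommGroup H₁] [InnerProductSpace ℂ H₁] [CompleteSpace H₁]
    [NormedAddCommGroup H₂] [InnerProductSpace ℂ H₂] [CompleteSpace H₂]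
    (B : H₂ →L[ℂ] H₁) (C : H₁ →L[ℂ] H₂)
    (T : WithLp 2 (H₁ × H₂) →L[ℂ] WithLp 2 (H₁ × H₂))
    (hT : ∀ x : H₁, ∀ y : H₂,
      T ((WithLp.equiv 2 (H₁ × H₂)).symm (x, y)) = (WithLp.equiv 2 (H₁ × H₂)).symm (B y, C x))
    (α : ℝ) (hα0 : 0 ≤ α) (hα1 : α ≤ 1) :
    numRad T ^ 2 ≤
      max ‖(1 - α) • (B ∘L ContinuousLinearMap.adjoint B) +
            α • (ContinuousLinearMap.adjoint C ∘L C)‖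
          ‖α • (ContinuousLinearMap.adjoint B ∘L B) +
            (1 - α) • (C ∘L ContinuousLinearMap.adjoint C)‖ := by
  set M := max ‖(1 - α) • (B ∘L B†) + α • (C† ∘L C)‖ ‖α • (B† ∘L B) + (1 - α) • (C ∘L C†)‖
  have hP (x : H₁) : (1 - α) * ‖(B†) x‖ ^ 2 + α * ‖C x‖ ^ 2 ≤ M * ‖x‖ ^ 2 := by
    have := smul_norm_sq_add_smul_norm_sq_le (B†) C (1 - α) α x
    rw [adjoint_adjoint] at this
    exact this.trans (by gcongr; exact le_max_left _ _)
  have hQ (y : H₂) : α * ‖B y‖ ^ 2 + (1 - α) * ‖(C†) y‖ ^ 2 ≤ M * ‖y‖ ^ 2 := by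
    have := smul_norm_sq_add_smul_norm_sq_le B (C†) α (1 - α) y
    rw [adjoint_adjoint] at this
    exact this.trans (by gcongr; exact le_max_right _ _)
  refine numRad_sq_le ((norm_nonneg _).trans (le_max_left _ _)) fun z hz => ?_
  have hz2 : ‖z.fst‖ ^ 2 + ‖z.snd‖ ^ 2 = 1 := by
    rw [← WithLp.prod_norm_sq_eq_of_L2, hz, one_pow]
  rw [inner_apply_self_of_offDiagonal hT]
  refine (sq_norm_inner_add_inner_le B C z.fst z.snd hα0 hα1).trans ?_
  rw [hz2, mul_one]
  linarith [hP z.fst, hQ z.snd, congrArg (M * ·) hz2]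
end
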